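/- arXiv:2507.13717 — 4 statements merged into one kernel-verified Lean document; each statement's English description precedes it below -/
import Mathlib

section
/- With the setup of the TO feasibility problem: fix traffic T_{i,j} ≥ 0, capacities S_{i,j} > 0, port budgets R_i. For u > 0 let n^U_{i,j}(u) = ⌈max(T_{i,j}/(u·S_{i,j}), T_{j,i}/(u·S_{j,i}))⌉. If u is feasible (i.e., Σ_{j≠i} n^U_{i,j}(u) ≤ R_i for all i), then the refined value ũ = max_{i≠j} T_{i,j}/(n^U_{i,j}(u)·S_{i,j}) satisfies ũ ≤ u, and ũ is also feasible, witnessed by the same allocation n^U_{i,j}(u). -/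
open Finset

/-- Minimal required link count between PoDs `i` and `j` at utilization level `u`. -/
noncomputable def nU {N : ℕ} (T S : Fin N → Fin N → ℝ) (u : ℝ) (i j : Fin N) : ℕ :=
  ⌈max (T i j / (u * S i j)) (T j i / (u * S j i))⌉₊

/-- Number of ports used at PoD `i` by topology `n`. -/
def ports {N : ℕ} (n : Fin N → Fin N → ℕ) (i : Fin N) : ℕ :=
  ∑ j ∈ Finset.univ.filter (fun j => j ≠ i), n i j

theorem absm_refinement_feasible {N : ℕ}
    (T S : Fin N → Fin N → ℝ) (R : Fin N → ℕ)
    (hne : (Finset.univ.offDiag (α := Fin N)).Nonempty)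
    (hT : ∀ i j : Fin N, i ≠ j → 0 < T i j)
    (hS : ∀ i j : Fin N, 0 < S i j)
    (u : ℝ) (hu : 0 < u)
    (hfeas : ∀ i : Fin N, ports (nU T S u) i ≤ R i) :
    ∃ ut : ℝ,
      ut = Finset.sup' Finset.univ.offDiag hne
        (fun p => T p.1 p.2 / ((nU T S u p.1 p.2 : ℝ) * S p.1 p.2)) ∧
      ut ≤ u ∧
      (∀ i : Fin N, ports (nU T S ut) i ≤ R i) ∧
      (∀ i j : Fin N, i ≠ j → T i j ≤ ut * (nU T S u i j : ℝ) * S i j) := by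
  classical
  set n : Fin N → Fin N → ℕ := nU T S u with hn
  have hsymm : ∀ i j : Fin N, n j i = n i j := by
    intro i j
    simp only [hn, nU, max_comm]
  have hnpos : ∀ i j : Fin N, i ≠ j → (0:ℝ) < n i j := by
    intro i j hij
    have : 0 < n i j := by
      rw [hn]
      unfold nU
      rw [Nat.ceil_pos]
      have hpos : 0 < T i j / (u * S i j) :=
        div_pos (hT i j hij) (mul_pos hu (hS i j))
      exact lt_of_lt_of_le hpos (le_max_left _ _)
    exact_mod_cast this
  have hceil : ∀ i j : Fin N, T i j / (u * S i j) ≤ (n i j : ℝ) := by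
    intro i j
    exact le_trans (le_max_left _ _) (Nat.le_ceil _)
  -- each term is ≤ u
  have hterm_le : ∀ i j : Fin N, i ≠ j →
      T i j / ((n i j : ℝ) * S i j) ≤ u := by
    intro i j hij
    have hnS : (0:ℝ) < (n i j : ℝ) * S i j := mul_pos (hnpos i j hij) (hS i j)
    rw [div_le_iff₀ hnS]
    have := (div_le_iff₀ (mul_pos hu (hS i j))).mp (hceil i j)
    linarith [this]
  set ut : ℝ := Finset.sup' Finset.univ.offDiag hne
      (fun p => T p.1 p.2 / ((n p.1 p.2 : ℝ) * S p.1 p.2)) with hut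
  have hle : ∀ i j : Fin N, i ≠ j →
      T i j / ((n i j : ℝ) * S i j) ≤ ut := by
    intro i j hij
    have hmem : (i, j) ∈ (Finset.univ.offDiag : Finset (Fin N × Fin N)) :=
      Finset.mem_offDiag.mpr ⟨Finset.mem_univ i, Finset.mem_univ j, hij⟩
    exact Finset.le_sup' (fun p : Fin N × Fin N => T p.1 p.2 / ((n p.1 p.2 : ℝ) * S p.1 p.2)) hmem
  have hut_le_u : ut ≤ u := by
    apply Finset.sup'_le
    intro p hp
    exact hterm_le p.1 p.2 (Finset.mem_offDiag.mp hp).2.2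
  have hut_pos : 0 < ut := by
    obtain ⟨p, hp⟩ := hne
    have hij := (Finset.mem_offDiag.mp hp).2.2
    have : 0 < T p.1 p.2 / ((n p.1 p.2 : ℝ) * S p.1 p.2) :=
      div_pos (hT _ _ hij) (mul_pos (hnpos _ _ hij) (hS _ _))
    exact lt_of_lt_of_le this (hle _ _ hij)
  have hkey : ∀ i j : Fin N, i ≠ j → T i j ≤ ut * (n i j : ℝ) * S i j := by
    intro i j hij
    have hnS : (0:ℝ) < (n i j : ℝ) * S i j := mul_pos (hnpos i j hij) (hS i j)
    have := (div_le_iff₀ hnS).mp (hle i j hij)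
    linarith [this]
  refine ⟨ut, rfl, hut_le_u, ?_, hkey⟩
  -- feasibility at ut
  have hmono : ∀ i j : Fin N, i ≠ j → nU T S ut i j ≤ n i j := by
    intro i j hij
    unfold nU
    rw [Nat.ceil_le, max_le_iff]
    constructor
    · rw [div_le_iff₀ (mul_pos hut_pos (hS i j))]
      have := hkey i j hij
      linarith [this]
    · rw [div_le_iff₀ (mul_pos hut_pos (hS j i))]
      have := hkey j i hij.symm
      rw [hsymm i j] at this
      linarith [this]
  intro i
  refine le_trans ?_ (hfeas i)
  unfold ports
  apply Finset.sum_le_sum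
  intro j hj
  have hji : j ≠ i := (Finset.mem_filter.mp hj).2
  exact hmono i j hji.symm
end

section
/- If u* is the infimum of feasible utilizations for the TO subproblem (feasibility defined via n^U as in ABSM) and u* > 0, and if all T_{i,j} > 0, then u* itself is feasible; i.e., the feasible set {u > 0 : Σ_{j≠i} n^U_{i,j}(u) ≤ R_i ∀i} is a closed-from-below up-set of the form [u*, ∞), where u* equals max_{i≠j} T_{i,j}/(n^U_{i,j}(u*)·S_{i,j}). -/
set_option maxHeartbeats 1000000


open Finset Filter

private lemma div_rearrange {a u m s : ℝ} (hu : 0 < u) (hm : 0 < m) (hs : 0 < s) :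
    a / (u * s) ≤ m ↔ a / (m * s) ≤ u := by
  rw [div_le_iff₀ (mul_pos hu hs), div_le_iff₀ (mul_pos hm hs)]
  constructor <;> intro h <;> nlinarith

private lemma ceil_eventually_const {c w : ℝ} (hc : 0 < c) (hw : 0 < w) :
    ∀ᶠ u in nhdsWithin w (Set.Ici w), ⌈c / u⌉₊ = ⌈c / w⌉₊ := by
  have hm0 : ⌈c / w⌉₊ ≠ 0 := (Nat.ceil_pos.mpr (div_pos hc hw)).ne'
  obtain ⟨h1, h2⟩ := (Nat.ceil_eq_iff hm0).mp rfl
  rcases Nat.eq_zero_or_pos (⌈c / w⌉₊ - 1) with h | h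
  · filter_upwards [eventually_mem_nhdsWithin] with u hu
    have hu0 : 0 < u := lt_of_lt_of_le hw hu
    refine (Nat.ceil_eq_iff hm0).mpr ⟨?_, ?_⟩
    · rw [h]; push_cast; exact div_pos hc hu0
    · exact le_trans (div_le_div_of_nonneg_left hc.le hw hu) h2
  · have hb : w < c / ((⌈c / w⌉₊ - 1 : ℕ) : ℝ) := by
      have hpos : (0 : ℝ) < ((⌈c / w⌉₊ - 1 : ℕ) : ℝ) := by exact_mod_cast h
      rw [lt_div_iff₀ hpos]
      rw [lt_div_iff₀ hw] at h1
      nlinarith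
    have hev : ∀ᶠ u in nhdsWithin w (Set.Ici w),
        u < c / ((⌈c / w⌉₊ - 1 : ℕ) : ℝ) :=
      (eventually_lt_nhds hb).filter_mono nhdsWithin_le_nhds
    filter_upwards [eventually_mem_nhdsWithin, hev] with u hu hub
    have hu0 : 0 < u := lt_of_lt_of_le hw hu
    refine (Nat.ceil_eq_iff hm0).mpr ⟨?_, ?_⟩
    · have hpos : (0 : ℝ) < ((⌈c / w⌉₊ - 1 : ℕ) : ℝ) := by exact_mod_cast h
      rw [lt_div_iff₀ hu0]
      rw [lt_div_iff₀ hpos] at hub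
      nlinarith
    · exact le_trans (div_le_div_of_nonneg_left hc.le hw hu) h2

theorem feasible_set_is_Ici {N : ℕ}
    (T S : Fin N → Fin N → ℝ) (R : Fin N → ℕ)
    (hne : (Finset.univ.offDiag (α := Fin N)).Nonempty)
    (hT : ∀ i j : Fin N, i ≠ j → 0 < T i j)
    (hS : ∀ i j : Fin N, 0 < S i j)
    (ustar : ℝ)
    (hinf : IsGLB {u : ℝ | 0 < u ∧ ∀ i : Fin N, ports (nU T S u) i ≤ R i} ustar)
    (hpos : 0 < ustar) :
    {u : ℝ | 0 < u ∧ ∀ i : Fin N, ports (nU T S u) i ≤ R i} = Set.Ici ustar ∧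
    ustar = Finset.sup' Finset.univ.offDiag hne
      (fun p => T p.1 p.2 / ((nU T S ustar p.1 p.2 : ℝ) * S p.1 p.2)) := by
  set F := {u : ℝ | 0 < u ∧ ∀ i : Fin N, ports (nU T S u) i ≤ R i} with hF
  -- combined traffic constant
  set c : Fin N → Fin N → ℝ := fun i j => max (T i j / S i j) (T j i / S j i) with hc
  have hcu : ∀ u : ℝ, 0 < u → ∀ i j : Fin N, nU T S u i j = ⌈c i j / u⌉₊ := by
    intro u hu i j
    unfold nU
    rw [hc]
    rw [show T i j / (u * S i j) = (T i j / S i j) / u by rw [mul_comm, div_div],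
        show T j i / (u * S j i) = (T j i / S j i) / u by rw [mul_comm, div_div],
        max_div_div_right hu.le]
  have hcpos : ∀ i j : Fin N, i ≠ j → 0 < c i j :=
    fun i j hij => lt_of_lt_of_le (div_pos (hT i j hij) (hS i j)) (le_max_left _ _)
  have hcsymm : ∀ i j : Fin N, c i j = c j i := fun i j => max_comm _ _
  -- nU is antitone in u
  have hnUmono : ∀ u v : ℝ, 0 < u → u ≤ v → ∀ i j : Fin N, i ≠ j →
      nU T S v i j ≤ nU T S u i j := by
    intro u v hu huv i j hij
    rw [hcu u hu i j, hcu v (lt_of_lt_of_le hu huv) i j]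
    exact Nat.ceil_mono (by gcongr; exact (hcpos i j hij).le)
  have hports : ∀ u v : ℝ, 0 < u → u ≤ v → ∀ i : Fin N,
      ports (nU T S v) i ≤ ports (nU T S u) i := by
    intro u v hu huv i
    refine Finset.sum_le_sum fun j hj => ?_
    rw [Finset.mem_filter] at hj
    exact hnUmono u v hu huv i j (Ne.symm hj.2)
  -- F is nonempty
  have hFne : F.Nonempty := by
    by_contra h
    rw [Set.not_nonempty_iff_eq_empty] at h
    have : ustar + 1 ∈ lowerBounds F := by rw [h]; intro x hx; exact hx.elim
    have := hinf.2 this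
    linarith
  -- ustar is feasible
  have hustar : ustar ∈ F := by
    have hev : ∀ᶠ u in nhdsWithin ustar (Set.Ici ustar),
        ∀ p ∈ (Finset.univ.offDiag (α := Fin N)),
          ⌈c p.1 p.2 / u⌉₊ = ⌈c p.1 p.2 / ustar⌉₊ := by
      rw [Filter.eventually_all_finset]
      intro p hp
      rw [Finset.mem_offDiag] at hp
      exact ceil_eventually_const (hcpos p.1 p.2 hp.2.2) hpos
    have hfr : ∃ᶠ u in nhdsWithin ustar (Set.Ici ustar), u ∈ F :=
      hinf.frequently_mem hFne
    obtain ⟨u, huF, hunear⟩ := (hfr.and_eventually hev).exists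
    have hu0 : 0 < u := huF.1
    have hustarle : ustar ≤ u := hinf.1 huF
    refine ⟨hpos, fun i => le_trans (le_of_eq ?_) (huF.2 i)⟩
    unfold ports
    refine Finset.sum_congr rfl fun j hj => ?_
    rw [Finset.mem_filter] at hj
    have hij : i ≠ j := Ne.symm hj.2
    rw [hcu ustar hpos i j, hcu u hu0 i j,
      hunear (i, j) (Finset.mem_offDiag.mpr ⟨Finset.mem_univ _, Finset.mem_univ _, hij⟩)]
  -- feasible set is Ici ustar
  have hIci : F = Set.Ici ustar := by
    ext u
    constructor
    · exact fun hu => hinf.1 hu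
    · intro hu
      exact ⟨lt_of_lt_of_le hpos hu, fun i => le_trans (hports ustar u hpos hu i) (hustar.2 i)⟩
  refine ⟨hIci, ?_⟩
  -- nU at ustar is positive off diagonal
  have hmpos : ∀ i j : Fin N, i ≠ j → (0 : ℝ) < (nU T S ustar i j : ℝ) := by
    intro i j hij
    have : 0 < nU T S ustar i j := by
      rw [hcu ustar hpos i j]
      exact Nat.ceil_pos.mpr (div_pos (hcpos i j hij) hpos)
    exact_mod_cast this
  -- the key inequality: c/(u) ≤ m ↔ ... via le_ceil
  have hfle : ∀ p ∈ (Finset.univ.offDiag (α := Fin N)),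
      T p.1 p.2 / ((nU T S ustar p.1 p.2 : ℝ) * S p.1 p.2) ≤ ustar := by
    intro p hp
    rw [Finset.mem_offDiag] at hp
    have h1 : T p.1 p.2 / (ustar * S p.1 p.2) ≤ (nU T S ustar p.1 p.2 : ℝ) :=
      le_trans (le_max_left _ _) (Nat.le_ceil _)
    exact (div_rearrange hpos (hmpos p.1 p.2 hp.2.2) (hS p.1 p.2)).mp h1
  set v := Finset.sup' Finset.univ.offDiag hne
      (fun p => T p.1 p.2 / ((nU T S ustar p.1 p.2 : ℝ) * S p.1 p.2)) with hv
  have hvle : v ≤ ustar := Finset.sup'_le _ _ hfle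
  -- v is positive
  have hv0 : 0 < v := by
    obtain ⟨p, hp⟩ := hne
    have hp' := Finset.mem_offDiag.mp hp
    refine lt_of_lt_of_le ?_ (Finset.le_sup' _ hp)
    exact div_pos (hT p.1 p.2 hp'.2.2) (mul_pos (hmpos p.1 p.2 hp'.2.2) (hS p.1 p.2))
  -- nU at v is at most nU at ustar
  have hnUv : ∀ i j : Fin N, i ≠ j → nU T S v i j ≤ nU T S ustar i j := by
    intro i j hij
    have hji : j ≠ i := Ne.symm hij
    have hsymm : nU T S ustar j i = nU T S ustar i j := by unfold nU; rw [max_comm]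
    have h1 : T i j / ((nU T S ustar i j : ℝ) * S i j) ≤ v := by
      rw [hv]
      exact Finset.le_sup' (b := (i, j)) (f := fun p => T p.1 p.2 / ((nU T S ustar p.1 p.2 : ℝ) * S p.1 p.2))
        (Finset.mem_offDiag.mpr ⟨Finset.mem_univ i, Finset.mem_univ j, hij⟩)
    have h2 : T j i / ((nU T S ustar i j : ℝ) * S j i) ≤ v := by
      rw [hv, ← hsymm]
      exact Finset.le_sup' (b := (j, i)) (f := fun p : Fin N × Fin N =>
          T p.1 p.2 / ((nU T S ustar p.1 p.2 : ℝ) * S p.1 p.2))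
        (Finset.mem_offDiag.mpr ⟨Finset.mem_univ j, Finset.mem_univ i, hji⟩)
    unfold nU
    rw [Nat.ceil_le, max_le_iff]
    constructor
    · exact (div_rearrange hv0 (hmpos i j hij) (hS i j)).mpr h1
    · exact (div_rearrange hv0 (hmpos i j hij) (hS j i)).mpr h2
  -- v is feasible
  have hvF : v ∈ F := by
    refine ⟨hv0, fun i => le_trans ?_ (hustar.2 i)⟩
    refine Finset.sum_le_sum fun j hj => ?_
    rw [Finset.mem_filter] at hj
    exact hnUv i j (Ne.symm hj.2)
  exact le_antisymm (hinf.1 hvF) hvle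
end

section
/- In the one-hop TO problem with traffic D_{i,j} > 0 (symmetric demand not required), capacities S_{i,j} > 0 symmetric, and port budgets R_i, the optimal (minimum) utilization equals u* = min over symmetric positive-integer matrices n with Σ_{j≠i} n_{i,j} ≤ R_i of max_{i≠j} D_{i,j}/(n_{i,j}·S_{i,j}), and the allocation n^U(u*) = ⌈max(D_{i,j}/(u*·S_{i,j}), D_{j,i}/(u*·S_{j,i}))⌉ attains this minimum. -/
open Finset

theorem one_hop_optimum_attained_by_nU {N : ℕ}
    (D S : Fin N → Fin N → ℝ) (R : Fin N → ℕ)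
    (hne : (Finset.univ.offDiag (α := Fin N)).Nonempty)
    (hD : ∀ i j : Fin N, i ≠ j → 0 < D i j)
    (hS : ∀ i j : Fin N, 0 < S i j)
    (hSsymm : ∀ i j : Fin N, S i j = S j i)
    (hR : ∀ i : Fin N, N - 1 ≤ R i)
    (ustar : ℝ)
    (hstar : IsLeast
      {u : ℝ | ∃ n : Fin N → Fin N → ℕ,
        (∀ i j : Fin N, n i j = n j i) ∧
        (∀ i j : Fin N, i ≠ j → 1 ≤ n i j) ∧
        (∀ i : Fin N, ports n i ≤ R i) ∧
        u = Finset.sup' Finset.univ.offDiag hne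
          (fun p => D p.1 p.2 / ((n p.1 p.2 : ℝ) * S p.1 p.2))} ustar) :
    (∀ i j : Fin N, nU D S ustar i j = nU D S ustar j i) ∧
    (∀ i j : Fin N, i ≠ j → 1 ≤ nU D S ustar i j) ∧
    (∀ i : Fin N, ports (nU D S ustar) i ≤ R i) ∧
    Finset.sup' Finset.univ.offDiag hne
      (fun p => D p.1 p.2 / ((nU D S ustar p.1 p.2 : ℝ) * S p.1 p.2)) = ustar := by

  obtain ⟨⟨n, hsym, hpos, hports, hu⟩, hlb⟩ := hstar
  -- positivity of ustar
  have hupos : 0 < ustar := by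
    obtain ⟨p, hp⟩ := hne
    obtain ⟨-, -, hp12⟩ := Finset.mem_offDiag.mp hp
    have hterm : 0 < D p.1 p.2 / ((n p.1 p.2 : ℝ) * S p.1 p.2) := by
      apply div_pos (hD _ _ hp12)
      exact mul_pos (by exact_mod_cast hpos _ _ hp12) (hS _ _)
    have hle := Finset.le_sup' (fun p => D p.1 p.2 / ((n p.1 p.2 : ℝ) * S p.1 p.2)) hp
    rw [← hu] at hle
    linarith
  have key : ∀ i j : Fin N, i ≠ j → D i j / (ustar * S i j) ≤ (n i j : ℝ) := by
    intro i j hij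
    have hmem : (i, j) ∈ Finset.univ.offDiag :=
      Finset.mem_offDiag.mpr ⟨Finset.mem_univ _, Finset.mem_univ _, hij⟩
    have hle := Finset.le_sup' (fun p => D p.1 p.2 / ((n p.1 p.2 : ℝ) * S p.1 p.2)) hmem
    rw [← hu] at hle
    have hnpos : (0 : ℝ) < (n i j : ℝ) := by exact_mod_cast hpos _ _ hij
    have hSpos := hS i j
    rw [div_le_iff₀ (mul_pos hnpos hSpos)] at hle
    rw [div_le_iff₀ (mul_pos hupos hSpos)]
    nlinarith
  have hle : ∀ i j : Fin N, i ≠ j → nU D S ustar i j ≤ n i j := by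
    intro i j hij
    apply Nat.ceil_le.mpr
    apply max_le (key i j hij)
    rw [hsym i j]
    exact key j i (Ne.symm hij)
  have hnUsym : ∀ i j : Fin N, nU D S ustar i j = nU D S ustar j i := by
    intro i j; unfold nU; rw [max_comm]
  have hnUpos : ∀ i j : Fin N, i ≠ j → 1 ≤ nU D S ustar i j := by
    intro i j hij
    apply Nat.one_le_ceil_iff.mpr
    exact lt_max_of_lt_left (div_pos (hD _ _ hij) (mul_pos hupos (hS _ _)))
  have hportsU : ∀ i : Fin N, ports (nU D S ustar) i ≤ R i := by
    intro i
    refine le_trans ?_ (hports i)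
    apply Finset.sum_le_sum
    intro j hj
    exact hle i j (Ne.symm (Finset.mem_filter.mp hj).2)
  refine ⟨hnUsym, hnUpos, hportsU, ?_⟩
  apply le_antisymm
  · apply Finset.sup'_le
    intro p hp
    obtain ⟨-, -, hp12⟩ := Finset.mem_offDiag.mp hp
    have h1 : D p.1 p.2 / (ustar * S p.1 p.2) ≤ (nU D S ustar p.1 p.2 : ℝ) :=
      le_trans (le_max_left _ _) (Nat.le_ceil _)
    have hnpos : (0 : ℝ) < (nU D S ustar p.1 p.2 : ℝ) := by
      exact_mod_cast hnUpos _ _ hp12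
    have hSpos := hS p.1 p.2
    rw [div_le_iff₀ (mul_pos hupos hSpos)] at h1
    rw [div_le_iff₀ (mul_pos hnpos hSpos)]
    nlinarith
  · exact hlb ⟨nU D S ustar, hnUsym, hnUpos, hportsU, rfl⟩
end

section
/- Halving invariant of ABSM: in each iteration, with current interval [a, b] (a < b) and midpoint m = (a+b)/2, the new interval is either [m, b] (infeasible case) or [a, ũ] with ũ ≤ m (feasible case, using the refined bound); in both cases the new interval length is at most (b − a)/2, and the invariants 'b is feasible' and 'the optimum lies in [a, b]' are preserved, i.e., if the optimal utilization u* satisfies a ≤ u* ≤ b before the iteration, it satisfies the same with the new bounds. -/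
open Finset

lemma nU_symm {N : ℕ} (T S : Fin N → Fin N → ℝ) (u : ℝ) (i j : Fin N) :
    nU T S u i j = nU T S u j i := by
  simp [nU, max_comm]

lemma nU_anti {N : ℕ} (T S : Fin N → Fin N → ℝ)
    (hT : ∀ i j : Fin N, i ≠ j → 0 < T i j) (hS : ∀ i j : Fin N, 0 < S i j)
    {u v : ℝ} (hu : 0 < u) (huv : u ≤ v) {i j : Fin N} (hij : i ≠ j) :
    nU T S v i j ≤ nU T S u i j := by
  unfold nU
  have hv : 0 < v := lt_of_lt_of_le hu huv
  apply Nat.ceil_le_ceil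
  apply max_le_max
  · exact div_le_div_of_nonneg_left (hT i j hij).le (mul_pos hu (hS i j))
      (by nlinarith [hS i j])
  · exact div_le_div_of_nonneg_left (hT j i hij.symm).le (mul_pos hu (hS j i))
      (by nlinarith [hS j i])

lemma ports_anti {N : ℕ} (T S : Fin N → Fin N → ℝ)
    (hT : ∀ i j : Fin N, i ≠ j → 0 < T i j) (hS : ∀ i j : Fin N, 0 < S i j)
    {u v : ℝ} (hu : 0 < u) (huv : u ≤ v) (i : Fin N) :
    ports (nU T S v) i ≤ ports (nU T S u) i := by
  apply Finset.sum_le_sum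
  intro j hj
  rw [Finset.mem_filter] at hj
  exact nU_anti T S hT hS hu huv (Ne.symm hj.2)

theorem absm_halving_invariant {N : ℕ}
    (T S : Fin N → Fin N → ℝ) (R : Fin N → ℕ)
    (hne : (Finset.univ.offDiag (α := Fin N)).Nonempty)
    (hT : ∀ i j : Fin N, i ≠ j → 0 < T i j)
    (hS : ∀ i j : Fin N, 0 < S i j)
    (a b ustar : ℝ) (ha : 0 ≤ a) (hab : a < b)
    (hstar : IsLeast {u : ℝ | 0 < u ∧ ∀ i : Fin N, ports (nU T S u) i ≤ R i} ustar)
    (hlo : a ≤ ustar) (hhi : ustar ≤ b)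
    (hbfeas : 0 < b ∧ ∀ i : Fin N, ports (nU T S b) i ≤ R i) :
    (¬ (0 < (a + b) / 2 ∧ ∀ i : Fin N, ports (nU T S ((a + b) / 2)) i ≤ R i) →
      b - (a + b) / 2 ≤ (b - a) / 2 ∧
      (0 < b ∧ ∀ i : Fin N, ports (nU T S b) i ≤ R i) ∧
      (a + b) / 2 ≤ ustar ∧ ustar ≤ b) ∧
    ((0 < (a + b) / 2 ∧ ∀ i : Fin N, ports (nU T S ((a + b) / 2)) i ≤ R i) →
      ∃ ut : ℝ,
        ut = Finset.sup' Finset.univ.offDiag hne (fun p =>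
          T p.1 p.2 / ((nU T S ((a + b) / 2) p.1 p.2 : ℝ) * S p.1 p.2)) ∧
        ut ≤ (a + b) / 2 ∧
        (0 < ut ∧ ∀ i : Fin N, ports (nU T S ut) i ≤ R i) ∧
        a ≤ ustar ∧ ustar ≤ ut ∧ ut - a ≤ (b - a) / 2) := by
  have hb : 0 < b := hbfeas.1
  set m : ℝ := (a + b) / 2 with hm
  have hmpos : 0 < m := by positivity
  have hus : 0 < ustar := hstar.1.1
  -- nU at m is positive off-diagonal
  have hnpos : ∀ i j : Fin N, i ≠ j → 0 < nU T S m i j := by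
    intro i j hij
    apply Nat.ceil_pos.mpr
    exact lt_of_lt_of_le (div_pos (hT i j hij) (mul_pos hmpos (hS i j))) (le_max_left _ _)
  -- each term of the sup' is bounded by m and bounds T/(n S)
  have hterm_le : ∀ i j : Fin N, i ≠ j →
      T i j / ((nU T S m i j : ℝ) * S i j) ≤ m := by
    intro i j hij
    have hn : (0 : ℝ) < (nU T S m i j : ℝ) := by exact_mod_cast hnpos i j hij
    have h1 : T i j / (m * S i j) ≤ (nU T S m i j : ℝ) :=
      le_trans (le_max_left _ _) (Nat.le_ceil _)
    rw [div_le_iff₀ (mul_pos hmpos (hS i j))] at h1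
    rw [div_le_iff₀ (mul_pos hn (hS i j))]
    nlinarith [hS i j]
  constructor
  · intro hinfeas
    refine ⟨by linarith, hbfeas, ?_, hhi⟩
    by_contra hcon
    push_neg at hcon
    exact hinfeas ⟨hmpos, fun i =>
      le_trans (ports_anti T S hT hS hus hcon.le i) (hstar.1.2 i)⟩
  · intro hmfeas
    set ut := Finset.sup' Finset.univ.offDiag hne (fun p =>
        T p.1 p.2 / ((nU T S m p.1 p.2 : ℝ) * S p.1 p.2)) with hut
    have hutm : ut ≤ m := by
      apply Finset.sup'_le
      intro p hp
      rw [Finset.mem_offDiag] at hp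
      exact hterm_le p.1 p.2 hp.2.2
    have hutpos : 0 < ut := by
      obtain ⟨p, hp⟩ := hne
      have hp' := Finset.mem_offDiag.mp hp
      have hle := Finset.le_sup' (f := fun p : Fin N × Fin N =>
        T p.1 p.2 / ((nU T S m p.1 p.2 : ℝ) * S p.1 p.2)) hp
      refine lt_of_lt_of_le ?_ hle
      have hn : (0 : ℝ) < (nU T S m p.1 p.2 : ℝ) := by
        exact_mod_cast hnpos p.1 p.2 hp'.2.2
      exact div_pos (hT p.1 p.2 hp'.2.2) (mul_pos hn (hS p.1 p.2))
    have key : ∀ k l : Fin N, k ≠ l →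
        T k l / (ut * S k l) ≤ (nU T S m k l : ℝ) := by
      intro k l hkl
      have hmem : (k, l) ∈ Finset.univ.offDiag := by
        simp [Finset.mem_offDiag, hkl]
      have hle : T k l / ((nU T S m k l : ℝ) * S k l) ≤ ut :=
        Finset.le_sup' (f := fun p : Fin N × Fin N =>
          T p.1 p.2 / ((nU T S m p.1 p.2 : ℝ) * S p.1 p.2)) hmem
      have hn : (0 : ℝ) < (nU T S m k l : ℝ) := by
        exact_mod_cast hnpos k l hkl
      rw [div_le_iff₀ (mul_pos hn (hS k l))] at hle
      rw [div_le_iff₀ (mul_pos hutpos (hS k l))]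
      nlinarith [hS k l]
    have hfeas : 0 < ut ∧ ∀ i : Fin N, ports (nU T S ut) i ≤ R i := by
      refine ⟨hutpos, fun i => le_trans (Finset.sum_le_sum ?_) (hmfeas.2 i)⟩
      intro j hj
      have hij : i ≠ j := Ne.symm (Finset.mem_filter.mp hj).2
      apply Nat.ceil_le.mpr
      apply max_le
      · exact key i j hij
      · exact le_trans (key j i hij.symm) (by exact_mod_cast (nU_symm T S m j i).le)
    exact ⟨ut, rfl, hutm, hfeas, hlo, hstar.2 hfeas, by linarith⟩
end
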